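/- There is a bijection θ from the set A_d of words in {NE,D}^n with exactly d occurrences of the block D to the set of lattice paths in C^n_d (words in {N,E}^n with d letters E), given by replacing each block NE with N and each D with E. Moreover for every γ in A_d, bounce(γ) = area(θ(γ)) + C(n-d, 2). -/

import Mathlib

open scoped Classical

inductive Step : Type
  | N | E | D
deriving DecidableEq, Repr

instance : Fintype Step :=
  ⟨{Step.N, Step.E, Step.D}, by intro x; cases x <;> simp⟩

open Step

/-- number of occurrences of the letter `s` in the word `w` -/
def cnt (s : Step) (w : List Step) : ℕ := w.count s

/-- Schröder (or Dyck, if no `D`s) path in an `n × n` grid: every prefix has at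
least as many `N`s as `E`s, and the totals agree. -/
def IsSchroeder (w : List Step) : Prop :=
  (∀ p : List Step, p <+: w → cnt E p ≤ cnt N p) ∧ cnt N w = cnt E w

/-- words that are concatenations of blocks `NE` and `D` -/
inductive IsNED : List Step → Prop
  | nil : IsNED []
  | ne {w} : IsNED w → IsNED (N :: E :: w)
  | d {w} : IsNED w → IsNED (D :: w)

/-- area of a Schröder path: the number of lower triangles between the path and the
main diagonal, computed as the sum over `N` and `D` steps of the height
`#N - #E` of the starting point of the step above the diagonal. -/
def areaAux : ℕ → List Step → ℕ
  | _, [] => 0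
  | h, N :: w => h + areaAux (h+1) w
  | h, D :: w => h + areaAux h w
  | h, E :: w => areaAux (h-1) w

def area (w : List Step) : ℕ := areaAux 0 w

/-- area of an `N/E` lattice path in a rectangular grid: the number of boxes under
the path, i.e. the sum over `E` steps of the number of `N` steps before it. -/
def areaNEAux : ℕ → List Step → ℕ
  | _, [] => 0
  | h, N :: w => areaNEAux (h+1) w
  | h, E :: w => h + areaNEAux h w
  | h, D :: w => areaNEAux h w

def areaNE (w : List Step) : ℕ := areaNEAux 0 w

/-- number of `N`s occurring before the `(j+1)`-st `E` (`j` is 0-indexed);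
this is the height of the path above the horizontal interval `[j, j+1]`. -/
def nBefore : List Step → ℕ → ℕ
  | [], _ => 0
  | N :: w, j => 1 + nBefore w j
  | E :: w, j => if j = 0 then 0 else nBefore w (j-1)
  | D :: w, j => nBefore w j

/-- number of `E`s occurring before the `(i+1)`-st `N` (`i` is 0-indexed). -/
def eBefore : List Step → ℕ → ℕ
  | [], _ => 0
  | E :: w, i => 1 + eBefore w i
  | N :: w, i => if i = 0 then 0 else eBefore w (i-1)
  | D :: w, i => eBefore w i

/-- number of `D`s occurring after the `e`-th `E` (`e` is 1-indexed). -/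
def dAfterE : List Step → ℕ → ℕ
  | [], _ => 0
  | E :: w, e => if e ≤ 1 then cnt D w else dAfterE w (e-1)
  | D :: w, e => dAfterE w e
  | N :: w, e => dAfterE w e

/-- Combined computation of `bounce(Γ(γ)) + numph(γ)` along the bounce path of
`Γ(γ)`.  Here `g` is the Schröder path, `w = Γ(g)` is the underlying Dyck path,
`nn` its size; the bounce path has corners (peaks) at the positions
`j₀ = 0, jₖ₊₁ = nBefore w jₖ`; each intermediate return `jₖ₊₁ < nn` contributes
`nn - jₖ₊₁` to the bounce of `Γ(g)`, and the peak with corner at `jₖ` is the start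
of the `(jₖ+1)`-st east step, contributing to numph the number of diagonal steps of
`g` above it, i.e. after that east step. -/
def bounceAux (g w : List Step) (nn : ℕ) : ℕ → ℕ → ℕ
  | 0, _ => 0
  | fuel+1, j =>
      dAfterE g (j+1) +
        (if nn ≤ nBefore w j ∨ nBefore w j ≤ j then 0
         else (nn - nBefore w j) + bounceAux g w nn fuel (nBefore w j))

/-- the bounce statistic of a Schröder path: `bounce(Γ(γ)) + numph(γ)` -/
def bounce (g : List Step) : ℕ :=
  let w := g.filter (fun s => s ≠ D)
  let nn := cnt E w
  if nn = 0 then 0 else bounceAux g w nn g.length 0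

/-- the (signed) area coordinate `a_i = m·i - (#E before the (i+1)-st N)` of line `i`
(0-indexed) for a path in an `n × mn` grid. -/
def aLine (m : ℕ) (g : List Step) (i : ℕ) : ℤ := (m : ℤ) * i - eBefore g i

/-- an `(n, mn)`-Dyck path: `n` north steps, `mn` east steps, no diagonal steps,
staying weakly above the main diagonal. -/
def IsParkingPath (n m : ℕ) (g : List Step) : Prop :=
  (∀ s ∈ g, s ≠ D) ∧ cnt N g = n ∧ cnt E g = m * n ∧
    ∀ p : List Step, p <+: g → cnt E p ≤ m * cnt N p

/-- an `(n, mn)`-parking function: an `(n,mn)`-Dyck path labelled by a permutation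
`w` of `{0, …, n-1}` whose labels increase within each column. -/
def IsParking (n m : ℕ) (g : List Step) (w : Fin n → Fin n) : Prop :=
  IsParkingPath n m g ∧ Function.Bijective w ∧
    ∀ i j : Fin n, (j : ℕ) = (i : ℕ) + 1 → eBefore g (i : ℕ) = eBefore g (j : ℕ) → w i < w j

/-- the diagonal inversion statistic of an `(n, mn)`-parking function -/
def dinv (n m : ℕ) (g : List Step) (w : Fin n → Fin n) : ℤ :=
  ∑ i : Fin n, ∑ j : Fin n,
    if (i : ℕ) < (j : ℕ) then
      (if w i < w j then max 0 ((m : ℤ) - |aLine m g (i : ℕ) - aLine m g (j : ℕ)|) else 0) +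
        (if w j < w i then max 0 ((m : ℤ) - |aLine m g (j : ℕ) - aLine m g (i : ℕ) + 1|) else 0)
    else 0

/-- the number of descents of the word `w` -/
def desNum (n : ℕ) (w : Fin n → Fin n) : ℕ :=
  ((Finset.range (n-1)).filter fun i =>
    ∃ hj : i + 1 < n, w ⟨i+1, hj⟩ < w ⟨i, Nat.lt_of_succ_lt hj⟩).card

/-- the major index of the word `w` (with positions 1-indexed as usual) -/
def majStat (n : ℕ) (w : Fin n → Fin n) : ℕ :=
  ∑ i ∈ (Finset.range (n-1)).filter (fun i =>
    ∃ hj : i + 1 < n, w ⟨i+1, hj⟩ < w ⟨i, Nat.lt_of_succ_lt hj⟩), (i+1)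

/-- the reading word of a labelled path in an `n × mn` grid: labels are read along
diagonals parallel to the main diagonal, starting with the farthest diagonal,
each diagonal being read from top-right to bottom-left. -/
def readWord (n m : ℕ) (g : List Step) (lab : ℕ → ℕ) : List ℕ :=
  ((List.range (m * n + 1)).map fun k =>
    (((List.range n).reverse.filter fun i => aLine m g i = (m * n : ℤ) - k).map lab)).flatten

/-- the labelling function `ℕ → ℕ` associated to a permutation of `Fin n` -/
def labOf {n : ℕ} (w : Fin n → Fin n) : ℕ → ℕ :=
  fun i => if h : i < n then (w ⟨i, h⟩ : ℕ) else 0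

/-- one step of the algorithm `φ`, on the reversed word: find the rightmost
(i.e. first in the reversed word) east step not followed by an east step,
and swap it with the letter following it. -/
def phiRevAux : List Step → List Step
  | a :: E :: t => if a ≠ E then E :: a :: t else a :: phiRevAux (E :: t)
  | a :: t => a :: phiRevAux t
  | [] => []

/-- one step of the algorithm `φ` -/
def phiStep (w : List Step) : List Step := (phiRevAux w.reverse).reverse

/-- the sequence `φ(γ) = (γ₀, γ₁, …, γ_{bounce γ})` produced by the algorithm -/
def phiSeq (g : List Step) : List (List Step) :=
  (List.range (bounce g + 1)).map fun i => phiStep^[i] g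

/-- the union of all sequences `φ(γ)` over area-0 Schröder paths with `n` blocks -/
def phiUniv (n : ℕ) : Set (List Step) :=
  {p | ∃ g, IsNED g ∧ cnt N g + cnt D g = n ∧ p ∈ phiSeq g}

/-- the map replacing each block `NE` by `N` and each `D` by `E` -/
def theta : List Step → List Step
  | N :: E :: w => N :: theta w
  | D :: w => E :: theta w
  | _ :: w => theta w
  | [] => []

/-- the cells of the hook-shaped Young diagram `(d, 1^{n-d})` (row 0 is the arm). -/
def hookCells (n d : ℕ) : Finset (ℕ × ℕ) :=
  ((Finset.range d).image fun c => ((0 : ℕ), c)) ∪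
    ((Finset.range (n - d + 1)).image fun r => (r, (0 : ℕ)))

/-- a standard Young tableau of hook shape `(d, 1^{n-d})`: `pos i` is the cell
`(row, column)` containing the entry `i+1`; entries increase along rows and columns. -/
structure HookSYT (n d : ℕ) where
  pos : Fin n → ℕ × ℕ
  mem : ∀ i, pos i ∈ hookCells n d
  inj : Function.Injective pos
  rowInc : ∀ i j : Fin n, (pos i).1 = (pos j).1 → (pos i).2 < (pos j).2 → i < j
  colInc : ∀ i j : Fin n, (pos i).2 = (pos j).2 → (pos i).1 < (pos j).1 → i < j

/-- the descent set of a standard Young tableau: entries `i ∈ {1, …, n-1}` such that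
the entry `i+1` lies in a strictly higher row than `i`. -/
def Des {n d : ℕ} (τ : HookSYT n d) : Finset ℕ :=
  (Finset.Icc 1 (n-1)).filter fun i =>
    ∃ hi : i < n, ∃ hi' : i - 1 < n, (τ.pos ⟨i - 1, hi'⟩).1 < (τ.pos ⟨i, hi⟩).1

/-- the major index of a standard Young tableau -/
def majT {n d : ℕ} (τ : HookSYT n d) : ℕ := ∑ i ∈ Des τ, i

/-- the number of descents of a standard Young tableau -/
def desT {n d : ℕ} (τ : HookSYT n d) : ℕ := (Des τ).card

/-- the maximum of the descent set -/
def maxDes {n d : ℕ} (τ : HookSYT n d) : ℕ := (Des τ).sup id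

/-- the map `M_{n,d}`: the path `γ₁γ₂⋯γₙ` with `γₙ = NE`, `γ_{n-i} = NE` if
`i ∈ Des τ` and `γ_{n-i} = D` otherwise -/
def Mmap (n d : ℕ) (τ : HookSYT n d) : List Step :=
  (((List.range n).map fun j =>
    if j = n - 1 then [N, E]
    else if (n - 1 - j) ∈ Des τ then [N, E] else [D])).flatten

/-- the map `S_{n,d}`: the path `γ₁⋯γ_{n-1}` with `γ_{n-i} = NNEE` if
`i = max Des τ` and `1 ∈ Des τ`, `γ_{n-i} = NDE` if `i = max Des τ` and
`1 ∉ Des τ`, `γ_{n-i} = NE` if `i = 1` or `i ∈ Des τ ∖ {max Des τ}`, and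
`γ_{n-i} = D` otherwise. -/
def Smap (n d : ℕ) (τ : HookSYT n d) : List Step :=
  (((List.range (n-1)).map fun j =>
    if (n - 1 - j) = maxDes τ then (if 1 ∈ Des τ then [N,N,E,E] else [N,D,E])
    else if (n - 1 - j) = 1 ∨ (n - 1 - j) ∈ Des τ then [N,E] else [D])).flatten

/-- the set `V_{n,d}` of Schröder paths of the form `Dʲ NNEE u` or `Dʲ NDE u`
with `u ∈ {NE,D}* NE`, having `n-d+1` north steps and `d-1` diagonal steps. -/
def Vset (n d : ℕ) : Set (List Step) :=
  {g | (∃ j u, IsNED u ∧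
      (g = List.replicate j D ++ [N,N,E,E] ++ (u ++ [N,E]) ∨
       g = List.replicate j D ++ [N,D,E] ++ (u ++ [N,E]))) ∧
     cnt N g = n - d + 1 ∧ cnt D g = d - 1}

/-- Schröder paths in an `n × n` grid with `dd` diagonal steps, area `a`,
ending with `NE` -/
def SchT (n dd a : ℕ) : Set (List Step) :=
  {g | IsSchroeder g ∧ cnt D g = dd ∧ cnt N g = n - dd ∧ area g = a ∧ ∃ u, g = u ++ [N, E]}

/-- the 'upper' forms: `Dʲ NNEE γ' NE NE` or `γ' NE Dʲ NNEE γ''` -/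
def UpperForm (g : List Step) : Prop :=
  (∃ j u, IsNED u ∧ g = List.replicate j D ++ [N,N,E,E] ++ u ++ [N,E,N,E]) ∨
  (∃ u j v, IsNED u ∧ g = u ++ [N,E] ++ List.replicate j D ++ [N,N,E,E] ++ v)

/-- the 'lower' forms: `Dʲ NNEE γ' D NE` or `γ' NDE Dʲ NE γ''` -/
def LowerForm (g : List Step) : Prop :=
  (∃ j u, IsNED u ∧ g = List.replicate j D ++ [N,N,E,E] ++ u ++ [D,N,E]) ∨
  (∃ u j v, IsNED u ∧ g = u ++ [N,D,E] ++ List.replicate j D ++ [N,E] ++ v)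

/-- the number of distinct columns of the path -/
def Tcols (n : ℕ) (g : List Step) : ℕ :=
  ((Finset.range n).image fun i => eBefore g i).card

/-- the `q`-integer `[k]_q = 1 + q + ⋯ + q^{k-1}` as a polynomial -/
noncomputable def qInt (k : ℕ) : Polynomial ℤ := ∑ i ∈ Finset.range k, Polynomial.X ^ i

/-- the `q`-factorial `[k]!_q` -/
noncomputable def qFact (k : ℕ) : Polynomial ℤ := ∏ i ∈ Finset.range k, qInt (i+1)

/-!
Reading a word of `{NE, D}*` block by block, `θ` is undone by sending `N ↦ NE` and `E ↦ D`.
Deleting the diagonal steps of such a word leaves the staircase `(NE)^m`, whose bounce path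
touches the diagonal after every step, so `bounce(Γ(γ)) = (m-1) + ⋯ + 1 + 0 = C(m, 2)`.
The peak of the `k`-th block `NE` carries the diagonal steps after it, which are exactly the
east steps of `θ(γ)` after its `k`-th north step; summing over `k` counts the boxes under `θ(γ)`.
-/

def thetaInv : List Step → List Step
  | [] => []
  | N :: w => N :: E :: thetaInv w
  | E :: w => D :: thetaInv w
  | D :: w => thetaInv w

@[simp] lemma cnt_nil (s : Step) : cnt s [] = 0 := rfl

@[simp] lemma cnt_cons (s a : Step) (w : List Step) :
    cnt s (a :: w) = cnt s w + if a = s then 1 else 0 := by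
  simp [cnt, List.count_cons]

namespace IsNED

lemma thetaInv_theta {g : List Step} (hg : IsNED g) : thetaInv (theta g) = g := by
  induction hg with
  | nil => rfl
  | ne _ ih => simp [theta, thetaInv, ih]
  | d _ ih => simp [theta, thetaInv, ih]

lemma not_mem_D_theta {g : List Step} (hg : IsNED g) : D ∉ theta g := by
  induction hg with
  | nil => simp [theta]
  | ne _ ih => simpa [theta] using ih
  | d _ ih => simpa [theta] using ih

lemma cnt_E_theta {g : List Step} (hg : IsNED g) : cnt E (theta g) = cnt D g := by
  induction hg with
  | nil => rfl
  | ne _ ih => simp [theta, ih]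
  | d _ ih => simp [theta, ih]

lemma length_theta {g : List Step} (hg : IsNED g) :
    (theta g).length = cnt N g + cnt D g := by
  induction hg with
  | nil => rfl
  | ne _ ih => simp [theta, ih]; omega
  | d _ ih => simp [theta, ih]; omega

end IsNED

section NoDiagonal

variable {w : List Step}

lemma theta_thetaInv (hw : D ∉ w) : theta (thetaInv w) = w := by
  induction w with
  | nil => rfl
  | cons a t ih =>
    rw [List.mem_cons, not_or] at hw
    cases a with
    | N => simp [thetaInv, theta, ih hw.2]
    | E => simp [thetaInv, theta, ih hw.2]
    | D => exact absurd rfl hw.1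

lemma isNED_thetaInv (hw : D ∉ w) : IsNED (thetaInv w) := by
  induction w with
  | nil => exact .nil
  | cons a t ih =>
    rw [List.mem_cons, not_or] at hw
    cases a with
    | N => exact .ne (ih hw.2)
    | E => exact .d (ih hw.2)
    | D => exact absurd rfl hw.1

lemma cnt_D_thetaInv (hw : D ∉ w) : cnt D (thetaInv w) = cnt E w := by
  induction w with
  | nil => rfl
  | cons a t ih =>
    rw [List.mem_cons, not_or] at hw
    cases a with
    | N => simp [thetaInv, ih hw.2]
    | E => simp [thetaInv, ih hw.2]
    | D => exact absurd rfl hw.1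

lemma cnt_N_thetaInv_add_cnt_E (hw : D ∉ w) : cnt N (thetaInv w) + cnt E w = w.length := by
  induction w with
  | nil => rfl
  | cons a t ih =>
    rw [List.mem_cons, not_or] at hw
    cases a with
    | N => simp [thetaInv, ← ih hw.2]; omega
    | E => simp [thetaInv, ← ih hw.2]; omega
    | D => exact absurd rfl hw.1

end NoDiagonal

def staircase : ℕ → List Step
  | 0 => []
  | m + 1 => N :: E :: staircase m

@[simp] lemma cnt_E_staircase (m : ℕ) : cnt E (staircase m) = m := by
  induction m with
  | zero => rfl
  | succ m ih => simp [staircase, ih]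

lemma nBefore_staircase (m j : ℕ) : nBefore (staircase m) j = min (j + 1) m := by
  induction m generalizing j with
  | zero => simp [staircase, nBefore]
  | succ m ih =>
    cases j with
    | zero => simp [staircase, nBefore]
    | succ k => simp [staircase, nBefore, ih k]; omega

lemma IsNED.filter_ne_D {g : List Step} (hg : IsNED g) :
    g.filter (· ≠ D) = staircase (cnt N g) := by
  induction hg with
  | nil => rfl
  | ne _ ih => simpa [staircase] using ih
  | d _ ih => simpa [staircase] using ih

lemma bounceAux_staircase (g : List Step) {m : ℕ} :
    ∀ fuel j, j < m → m ≤ j + fuel →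
      bounceAux g (staircase m) m fuel j =
        ∑ k ∈ Finset.Ico j m, (dAfterE g (k + 1) + (m - (k + 1)))
  | 0, _, hj, hfuel => by omega
  | fuel + 1, j, hj, hfuel => by
    rw [bounceAux, nBefore_staircase, Finset.sum_eq_sum_Ico_succ_bot hj]
    by_cases hlast : j + 1 = m
    · subst hlast
      simp
    · rw [if_neg (by omega), min_eq_left (by omega),
        bounceAux_staircase g fuel (j + 1) (by omega) (by omega)]
      omega

lemma areaNEAux_eq (w : List Step) (h : ℕ) : areaNEAux h w = h * cnt E w + areaNE w := by
  induction w generalizing h with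
  | nil => simp [areaNEAux, areaNE]
  | cons a t ih =>
    cases a with
    | N => rw [areaNE, areaNEAux, areaNEAux, ih, ih 1, cnt_cons]; simp; ring
    | E => rw [areaNE, areaNEAux, areaNEAux, ih, ih 0, cnt_cons]; simp; ring
    | D => rw [areaNE, areaNEAux, areaNEAux, ih, ih 0, cnt_cons]; simp

lemma IsNED.sum_dAfterE {g : List Step} (hg : IsNED g) :
    ∑ k ∈ Finset.range (cnt N g), dAfterE g (k + 1) = areaNE (theta g) := by
  induction hg with
  | nil => rfl
  | @ne w hw ih =>
    have hpeak : areaNE (theta (N :: E :: w)) = cnt D w + areaNE (theta w) := by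
      rw [theta, areaNE, areaNEAux, areaNEAux_eq, hw.cnt_E_theta, zero_add, one_mul]
    simp [Finset.sum_range_succ', dAfterE, cnt, hpeak, ← ih, add_comm]
  | @d w _ ih => simpa [dAfterE, theta, areaNE, areaNEAux] using ih

lemma sum_range_sub_succ (m : ℕ) : ∑ k ∈ Finset.range m, (m - (k + 1)) = m.choose 2 := by
  induction m with
  | zero => rfl
  | succ m ih => simp [Finset.sum_range_succ', ih, Nat.choose_succ_succ', add_comm]

lemma IsNED.bounce_eq {g : List Step} (hg : IsNED g) :
    bounce g = areaNE (theta g) + (cnt N g).choose 2 := by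
  simp only [bounce, hg.filter_ne_D, cnt_E_staircase]
  split_ifs with hm
  · simp [← hg.sum_dAfterE, hm]
  · have hlen : cnt N g ≤ g.length := List.count_le_length
    rw [bounceAux_staircase g _ 0 (by omega) (by omega), ← Finset.range_eq_Ico,
      Finset.sum_add_distrib, hg.sum_dAfterE, sum_range_sub_succ]

/-- The map `θ` (replacing each block `NE` by `N` and each `D` by `E`)
is a bijection from `A_d`, the words of `{NE,D}^n` with `d` blocks `D`, onto `C^n_d`,
and for every `γ ∈ A_d`, `bounce(γ) = area(θ(γ)) + C(n-d, 2)`. -/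
theorem stmt4 (n d : ℕ) (h : d ≤ n) :
    Set.BijOn theta
      {w | IsNED w ∧ cnt Step.D w = d ∧ cnt Step.N w = n - d}
      {w | (∀ s ∈ w, s ≠ Step.D) ∧ w.length = n ∧ cnt Step.E w = d} ∧
    ∀ w, IsNED w → cnt Step.D w = d → cnt Step.N w = n - d →
      bounce w = areaNE (theta w) + (n - d).choose 2 := by
  refine ⟨Set.InvOn.bijOn (f' := thetaInv) ⟨?_, ?_⟩ ?_ ?_, ?_⟩
  · exact fun g hg => hg.1.thetaInv_theta
  · exact fun w hw => theta_thetaInv (List.forall_mem_ne'.mp hw.1)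
  · rintro g ⟨hg, hD, hN⟩
    refine ⟨List.forall_mem_ne'.mpr hg.not_mem_D_theta, ?_, by rw [hg.cnt_E_theta, hD]⟩
    rw [hg.length_theta]
    omega
  · rintro w ⟨hw, hlen, hE⟩
    rw [List.forall_mem_ne'] at hw
    have := cnt_N_thetaInv_add_cnt_E hw
    exact ⟨isNED_thetaInv hw, by rw [cnt_D_thetaInv hw, hE], by omega⟩
  · intro g hg _ hN
    rw [hg.bounce_eq, hN]
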